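/- arXiv:1904.10294 — 3 statements merged into one kernel-verified Lean document; each statement's English description precedes it below -/
import Mathlib

section
/- For any h₀, h₁ > 0 and d ∈ [0, πη), the point-to-point WFR cost satisfies 2η²(h₀ + h₁ - 2√(h₀h₁)cos(d/(2η))) = min over r ≥ 0 of [C(d)·r + KL(r‖h₀) + KL(r‖h₁)]·2η², where KL(r‖h) = r·log(r/h) - r + h and C(d) = -2log(cos(d/(2η))); the minimizer is r* = √(h₀h₁)·cos(d/(2η)). -/
noncomputable def klR (r h : ℝ) : ℝ := r * Real.log (r / h) - r + h

theorem wfr_dirac_kl_identity (η h₀ h₁ d : ℝ) (hη : 0 < η) (h0 : 0 < h₀) (h1 : 0 < h₁)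
    (hd0 : 0 ≤ d) (hd : d < Real.pi * η) :
    let C : ℝ := -2 * Real.log (Real.cos (d / (2 * η)))
    let rstar : ℝ := Real.sqrt (h₀ * h₁) * Real.cos (d / (2 * η))
    (∀ r : ℝ, 0 ≤ r →
        C * rstar + klR rstar h₀ + klR rstar h₁ ≤ C * r + klR r h₀ + klR r h₁) ∧
    C * rstar + klR rstar h₀ + klR rstar h₁ =
      h₀ + h₁ - 2 * Real.sqrt (h₀ * h₁) * Real.cos (d / (2 * η)) := by
  intro C rstar
  have h2η : (0:ℝ) < 2 * η := by linarith
  have hx0 : 0 ≤ d / (2 * η) := div_nonneg hd0 h2η.le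
  have hxlt : d / (2 * η) < Real.pi / 2 := by
    rw [div_lt_div_iff₀ h2η two_pos]; nlinarith
  have hc : 0 < Real.cos (d / (2 * η)) :=
    Real.cos_pos_of_mem_Ioo ⟨by linarith [Real.pi_pos], hxlt⟩
  have hs : 0 < Real.sqrt (h₀ * h₁) := Real.sqrt_pos.mpr (mul_pos h0 h1)
  have hr : 0 < rstar := mul_pos hs hc
  have hC : C = -2 * Real.log (Real.cos (d / (2 * η))) := rfl
  have hrs : rstar = Real.sqrt (h₀ * h₁) * Real.cos (d / (2 * η)) := rfl
  have hlog : Real.log (rstar / h₀) + Real.log (rstar / h₁)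
      = 2 * Real.log (Real.cos (d / (2 * η))) := by
    rw [Real.log_div hr.ne' h0.ne', Real.log_div hr.ne' h1.ne', hrs,
      Real.log_mul hs.ne' hc.ne', Real.log_sqrt (mul_pos h0 h1).le,
      Real.log_mul h0.ne' h1.ne']
    ring
  have heq : C * rstar + klR rstar h₀ + klR rstar h₁ =
      h₀ + h₁ - 2 * Real.sqrt (h₀ * h₁) * Real.cos (d / (2 * η)) := by
    unfold klR
    rw [hC]
    nlinarith [hlog, hrs]
  refine ⟨?_, heq⟩
  intro r hr0
  rcases eq_or_lt_of_le hr0 with h | hrpos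
  · subst h
    unfold klR
    unfold klR at heq
    simp only [zero_div, Real.log_zero, mul_zero, zero_mul, sub_zero, zero_add]
    nlinarith [heq, hr]
  · have hlogr : Real.log (r / h₀) + Real.log (r / h₁)
        = 2 * Real.log (r / rstar) + 2 * Real.log (Real.cos (d / (2 * η))) := by
      rw [Real.log_div hrpos.ne' h0.ne', Real.log_div hrpos.ne' h1.ne',
        Real.log_div hrpos.ne' hr.ne', hrs, Real.log_mul hs.ne' hc.ne',
        Real.log_sqrt (mul_pos h0 h1).le, Real.log_mul h0.ne' h1.ne']
      ring
    have hinv : Real.log (rstar / r) = - Real.log (r / rstar) := by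
      rw [← Real.log_inv, inv_div]
    have key : r - rstar ≤ r * Real.log (r / rstar) := by
      have h1' := Real.log_le_sub_one_of_pos (div_pos hr hrpos)
      rw [hinv] at h1'
      have h2' : r * (- Real.log (r / rstar)) ≤ r * (rstar / r - 1) :=
        mul_le_mul_of_nonneg_left h1' hrpos.le
      have h3' : r * (rstar / r) = rstar := by field_simp
      nlinarith
    have h3 : r * Real.log (r / h₀) + r * Real.log (r / h₁)
        = 2 * (r * Real.log (r / rstar)) + 2 * (r * Real.log (Real.cos (d / (2 * η)))) := by
      have := congrArg (fun t => r * t) hlogr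
      nlinarith [this]
    unfold klR at heq ⊢
    nlinarith [key, h3, hrs, heq, hC]
end

section
/- Weak duality holds for the discrete WFR problem: for any transport plan R with Rᵢⱼ ≥ 0 and any dual variables (φ, ψ) satisfying φᵢ + ψⱼ ≤ Cᵢⱼ for all i, j, one has Σᵢ(1 - e^{-φᵢ})μᵢ + Σⱼ(1 - e^{-ψⱼ})νⱼ ≤ Σᵢⱼ CᵢⱼRᵢⱼ + KL(Σⱼ Rᵢⱼ ‖ μ) + KL(Σᵢ Rᵢⱼ ‖ ν). -/
open Finset

@[simp, norm_cast]
lemma EReal.coe_finset_sum {ι : Type*} (s : Finset ι) (f : ι → ℝ) :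
    ((∑ i ∈ s, f i : ℝ) : EReal) = ∑ i ∈ s, (f i : EReal) :=
  map_sum (⟨⟨(↑), EReal.coe_zero⟩, EReal.coe_add⟩ : ℝ →+ EReal) f s

lemma EReal.coe_sum_mul_le_sum_mul {ι : Type*} (s : Finset ι) (c x : ι → ℝ) (C : ι → EReal)
    (hc : ∀ i ∈ s, (c i : EReal) ≤ C i) (hx : ∀ i ∈ s, 0 ≤ x i) :
    ((∑ i ∈ s, c i * x i : ℝ) : EReal) ≤ ∑ i ∈ s, C i * (x i : EReal) := by
  rw [EReal.coe_finset_sum]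
  refine sum_le_sum fun i hi => ?_
  rw [EReal.coe_mul]
  exact mul_le_mul_of_nonneg_right (hc i hi) (EReal.coe_nonneg.mpr (hx i hi))

lemma one_sub_exp_neg_mul_le_mul_add_klR (a : ℝ) {r h : ℝ} (hr : 0 ≤ r) (hh : 0 < h) :
    (1 - Real.exp (-a)) * h ≤ a * r + klR r h := by
  unfold klR
  rcases hr.eq_or_lt with rfl | hr
  · simp only [zero_div, Real.log_zero, mul_zero, zero_sub, zero_add]
    nlinarith [mul_pos (Real.exp_pos (-a)) hh]
  · -- `log x ≤ x - 1` at `x = h exp (-a) / r`; equality holds at the optimal `r = h exp (-a)`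
    have hlog := Real.log_le_sub_one_of_pos (x := h * Real.exp (-a) / r) (by positivity)
    rw [Real.log_div (by positivity) hr.ne', Real.log_mul hh.ne' (Real.exp_pos _).ne',
      Real.log_exp] at hlog
    have hmul := mul_le_mul_of_nonneg_left hlog hr.le
    rw [mul_sub r (_ / r), mul_div_cancel₀ _ hr.ne', mul_one] at hmul
    rw [Real.log_div hr.ne' hh.ne']
    linarith

lemma sum_sum_add_mul {ι κ : Type*} (s : Finset ι) (t : Finset κ) (f : ι → ℝ) (g : κ → ℝ)
    (R : ι → κ → ℝ) :
    ∑ i ∈ s, ∑ j ∈ t, (f i + g j) * R i j =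
      ∑ i ∈ s, f i * ∑ j ∈ t, R i j + ∑ j ∈ t, g j * ∑ i ∈ s, R i j := by
  simp only [add_mul, sum_add_distrib, mul_sum]
  rw [sum_comm (f := fun i j => g j * R i j)]

theorem wfr_weak_duality_general (I J : ℕ) (μ : Fin I → ℝ) (ν : Fin J → ℝ)
    (hμ : ∀ i, 0 < μ i) (hν : ∀ j, 0 < ν j)
    (C : Fin I → Fin J → EReal)
    (R : Fin I → Fin J → ℝ) (hR : ∀ i j, 0 ≤ R i j)
    (φ : Fin I → ℝ) (ψ : Fin J → ℝ)
    (hdual : ∀ i j, ((φ i + ψ j : ℝ) : EReal) ≤ C i j) :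
    ((∑ i, (1 - Real.exp (-φ i)) * μ i + ∑ j, (1 - Real.exp (-ψ j)) * ν j : ℝ) : EReal) ≤
      (∑ i, ∑ j, C i j * ((R i j : ℝ) : EReal)) +
        ((∑ i, klR (∑ j, R i j) (μ i) + ∑ j, klR (∑ i, R i j) (ν j) : ℝ) : EReal) := by
  have hrows : ∑ i, (1 - Real.exp (-φ i)) * μ i ≤
      ∑ i, (φ i * ∑ j, R i j + klR (∑ j, R i j) (μ i)) :=
    sum_le_sum fun i _ => one_sub_exp_neg_mul_le_mul_add_klR (φ i)
      (sum_nonneg fun j _ => hR i j) (hμ i)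
  have hcols : ∑ j, (1 - Real.exp (-ψ j)) * ν j ≤
      ∑ j, (ψ j * ∑ i, R i j + klR (∑ i, R i j) (ν j)) :=
    sum_le_sum fun j _ => one_sub_exp_neg_mul_le_mul_add_klR (ψ j)
      (sum_nonneg fun i _ => hR i j) (hν j)
  have hreal : ∑ i, (1 - Real.exp (-φ i)) * μ i + ∑ j, (1 - Real.exp (-ψ j)) * ν j ≤
      ∑ i, ∑ j, (φ i + ψ j) * R i j +
        (∑ i, klR (∑ j, R i j) (μ i) + ∑ j, klR (∑ i, R i j) (ν j)) := by
    rw [sum_sum_add_mul]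
    rw [sum_add_distrib] at hrows hcols
    linarith
  have htransport : ((∑ i, ∑ j, (φ i + ψ j) * R i j : ℝ) : EReal) ≤
      ∑ i, ∑ j, C i j * ((R i j : ℝ) : EReal) := by
    rw [EReal.coe_finset_sum]
    exact sum_le_sum fun i _ => EReal.coe_sum_mul_le_sum_mul _ _ _ _
      (fun j _ => hdual i j) (fun j _ => hR i j)
  calc _ ≤ (((∑ i, ∑ j, (φ i + ψ j) * R i j) +
          (∑ i, klR (∑ j, R i j) (μ i) + ∑ j, klR (∑ i, R i j) (ν j)) : ℝ) : EReal) :=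
        EReal.coe_le_coe_iff.mpr hreal
    _ ≤ _ := by
        rw [EReal.coe_add]
        exact add_le_add_left htransport _

theorem wfr_weak_duality (I J : ℕ) (μ : Fin I → ℝ) (ν : Fin J → ℝ)
    (hμ : ∀ i, 0 < μ i) (hν : ∀ j, 0 < ν j)
    (C : Fin I → Fin J → EReal) (hC : ∀ i j, 0 ≤ C i j)
    (R : Fin I → Fin J → ℝ) (hR : ∀ i j, 0 ≤ R i j)
    (φ : Fin I → ℝ) (ψ : Fin J → ℝ)
    (hdual : ∀ i j, ((φ i + ψ j : ℝ) : EReal) ≤ C i j) :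
    ((∑ i, (1 - Real.exp (-φ i)) * μ i + ∑ j, (1 - Real.exp (-ψ j)) * ν j : ℝ) : EReal) ≤
      (∑ i, ∑ j, C i j * ((R i j : ℝ) : EReal)) +
        ((∑ i, klR (∑ j, R i j) (μ i) + ∑ j, klR (∑ i, R i j) (ν j) : ℝ) : EReal) :=
  wfr_weak_duality_general I J μ ν hμ hν C R hR φ ψ hdual
end

section
/- Fix ε > 0, ν positive, and a positive kernel K. For each i, the function φᵢ ↦ (1 - e^{-φᵢ})μᵢ + ε·Σⱼ(1 - e^{(φᵢ+ψⱼ-Cᵢⱼ)/ε})·1 achieves its maximum at φᵢ = (ε/(1+ε))·log(μᵢ / Σⱼ e^{-Cᵢⱼ/ε}e^{ψⱼ/ε}), i.e., the Sinkhorn update u_i = (μᵢ / Σⱼ e^{-Cᵢⱼ/ε} vⱼ)^{1/(1+ε)} with u = e^{φ/ε}, v = e^{ψ/ε} is the exact coordinate maximizer of the entropic dual. -/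
/-! With `m = μᵢ` and `S = ∑ⱼ e^{-Cᵢⱼ/ε} e^{ψⱼ/ε}`, the objective is
`(1 - e^{-t}) m + ε (J - e^{t/ε} S)`, a concave function of `t`. Its derivative
`m e^{-t} - S e^{t/ε}` vanishes at `t₀ = ε/(1+ε) · log (m/S)`, and adding the tangent-line
bounds of `e^{-t}` and `e^{t/ε}` at `t₀` shows that `t₀` is a global maximum. -/

open Real

namespace Sinkhorn

/-- The dual objective in the coordinate `φᵢ = t`, with `m = μᵢ`, `S = ∑ⱼ Kᵢⱼ e^{ψⱼ/ε}` and
`n` the number of columns. -/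
noncomputable def coordDual (m S ε n t : ℝ) : ℝ :=
  (1 - exp (-t)) * m + ε * (n - exp (t / ε) * S)

noncomputable def phiUpdate (m S ε : ℝ) : ℝ :=
  ε / (1 + ε) * log (m / S)

lemma exp_mul_one_add_sub_le (a x : ℝ) : exp a * (1 + (x - a)) ≤ exp x := by
  calc exp a * (1 + (x - a)) ≤ exp a * exp (x - a) := by
        gcongr
        linarith [add_one_le_exp (x - a)]
    _ = exp x := by rw [← exp_add, add_sub_cancel]

lemma mul_exp_neg_add_mul_exp_div_le {a b ε t₀ : ℝ} (ha : 0 ≤ a) (hb : 0 ≤ b) (hε : 0 < ε)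
    (hcrit : a * exp (-t₀) = b * exp (t₀ / ε)) (t : ℝ) :
    a * exp (-t₀) + ε * (b * exp (t₀ / ε)) ≤ a * exp (-t) + ε * (b * exp (t / ε)) := by
  have hneg : a * (exp (-t₀) * (1 + (-t - -t₀))) ≤ a * exp (-t) :=
    mul_le_mul_of_nonneg_left (exp_mul_one_add_sub_le _ _) ha
  have hdiv : ε * (b * (exp (t₀ / ε) * (1 + (t / ε - t₀ / ε)))) ≤ ε * (b * exp (t / ε)) := by
    gcongr
    exact exp_mul_one_add_sub_le _ _
  have hlin : ε * (b * (exp (t₀ / ε) * (t / ε - t₀ / ε))) = (t - t₀) * (b * exp (t₀ / ε)) := by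
    field_simp
  have hcrit' : (t - t₀) * (a * exp (-t₀)) = (t - t₀) * (b * exp (t₀ / ε)) := by rw [hcrit]
  linarith

lemma mul_exp_neg_phiUpdate {m S ε : ℝ} (hm : 0 < m) (hS : 0 < S) (hε : 0 < ε) :
    m * exp (-phiUpdate m S ε) = S * exp (phiUpdate m S ε / ε) := by
  unfold phiUpdate
  set L := log (m / S) with hL
  have hm_eq : m = S * exp L := by
    rw [hL, exp_log (div_pos hm hS)]
    field_simp
  rw [hm_eq, mul_assoc, ← exp_add]
  congr 2
  field_simp
  ring

theorem coordDual_le_phiUpdate {m S ε : ℝ} (hm : 0 < m) (hS : 0 < S) (hε : 0 < ε) (n t : ℝ) :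
    coordDual m S ε n t ≤ coordDual m S ε n (phiUpdate m S ε) := by
  have key := mul_exp_neg_add_mul_exp_div_le hm.le hS.le hε (mul_exp_neg_phiUpdate hm hS hε) t
  unfold coordDual
  linarith

lemma sum_one_sub_exp_add_sub_div {ι : Type*} [Fintype ι] (ε t : ℝ) (ψ c : ι → ℝ) :
    ∑ j, (1 - exp ((t + ψ j - c j) / ε)) =
      Fintype.card ι - exp (t / ε) * ∑ j, exp (-c j / ε) * exp (ψ j / ε) := by
  rw [Finset.sum_sub_distrib, Finset.mul_sum]
  simp only [Finset.sum_const, Finset.card_univ, nsmul_eq_mul, mul_one, ← exp_add]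
  congr 2
  funext j
  ring_nf

end Sinkhorn

open Sinkhorn in
theorem sinkhorn_phi_update (I J : ℕ) (ε : ℝ) (hε : 0 < ε)
    (C : Fin I → Fin J → ℝ) (μ : Fin I → ℝ) (hμ : ∀ i, 0 < μ i)
    (ψ : Fin J → ℝ) (hJ : 0 < J) (i : Fin I) :
    ∀ t : ℝ,
      (1 - Real.exp (-t)) * μ i +
          ε * ∑ j, (1 - Real.exp ((t + ψ j - C i j) / ε)) ≤
        (1 - Real.exp (-(ε / (1 + ε) *
              Real.log (μ i / ∑ j, Real.exp (-C i j / ε) * Real.exp (ψ j / ε))))) * μ i +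
          ε * ∑ j, (1 - Real.exp
            ((ε / (1 + ε) *
                Real.log (μ i / ∑ j, Real.exp (-C i j / ε) * Real.exp (ψ j / ε)) +
                ψ j - C i j) / ε)) := by
  intro t
  have hS : 0 < ∑ j, exp (-C i j / ε) * exp (ψ j / ε) :=
    Finset.sum_pos (fun j _ => by positivity) ⟨⟨0, hJ⟩, Finset.mem_univ _⟩
  simp only [sum_one_sub_exp_add_sub_div]
  exact coordDual_le_phiUpdate (hμ i) hS hε _ t
end
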